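/- arXiv:2307.12202 — 2 statements merged into one kernel-verified Lean document; each statement's English description precedes it below -/
import Mathlib

section
/- Define ∂_η = ∂/∂x + i ∂/∂y and ∂_ξ = ∂/∂x - i ∂/∂y. The regular solid harmonics satisfy ∂_η R_n^m = i R_{n-1}^{m+1} and ∂_ξ R_n^m = i R_{n-1}^{m-1} for all n ≥ 1 and all integers m with |m| ≤ n. -/
/-- Euclidean length of a point of `ℝ × ℝ × ℝ`. -/
noncomputable def sphNorm (p : ℝ × ℝ × ℝ) : ℝ :=
  Real.sqrt (p.1 ^ 2 + p.2.1 ^ 2 + p.2.2 ^ 2)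

/-- Associated Legendre function
`P_n^m(μ) = ((-1)^m (1-μ²)^{m/2} / (2ⁿ n!)) dⁿ⁺ᵐ/dμⁿ⁺ᵐ (μ²-1)ⁿ` for `0 ≤ m`. -/
noncomputable def legP (n m : ℕ) (μ : ℝ) : ℝ :=
  ((-1 : ℝ) ^ m * (Real.sqrt (1 - μ ^ 2)) ^ m / ((2 : ℝ) ^ n * n.factorial)) *
    iteratedDeriv (n + m) (fun x : ℝ => (x ^ 2 - 1) ^ n) μ

/-- Regular solid harmonic
`R_n^m(r) = ((-1)^n i^{|m|}/(n+|m|)!) rⁿ P_n^{|m|}(cos θ) e^{imφ}`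
in the spherical coordinates of `r = (x, y, z)`. -/
noncomputable def solidR (n : ℕ) (m : ℤ) (p : ℝ × ℝ × ℝ) : ℂ :=
  ((-1 : ℂ) ^ n * Complex.I ^ m.natAbs / ((n + m.natAbs).factorial : ℂ)) *
    ((sphNorm p : ℝ) : ℂ) ^ n * ((legP n m.natAbs (p.2.2 / sphNorm p) : ℝ) : ℂ) *
    Complex.exp ((m : ℂ) * Complex.I * ((Complex.arg ((p.1 : ℂ) + (p.2.1 : ℝ) * Complex.I) : ℝ) : ℂ))

/-- Singular solid harmonic
`S_n^m(r) = i^{-|m|} (n-|m|)! r^{-n-1} P_n^{|m|}(cos θ) e^{imφ}`. -/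
noncomputable def solidS (n : ℕ) (m : ℤ) (p : ℝ × ℝ × ℝ) : ℂ :=
  (Complex.I ^ (-(m.natAbs : ℤ)) * ((n - m.natAbs).factorial : ℂ)) *
    ((sphNorm p : ℝ) : ℂ) ^ (-(n : ℤ) - 1) * ((legP n m.natAbs (p.2.2 / sphNorm p) : ℝ) : ℂ) *
    Complex.exp ((m : ℂ) * Complex.I * ((Complex.arg ((p.1 : ℂ) + (p.2.1 : ℝ) * Complex.I) : ℝ) : ℂ))

/-!
Off the origin the spherical formula is a polynomial. With `w = x + iy` and
`s = x² + y² + z² = r²`, expanding `(t² - 1)ⁿ` binomially shows that `rⁿ P_n^μ(z/r) e^{iμφ}` is a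
constant multiple of `w^μ L_{n,μ}(z, s)`, where `L_{n,μ}(z, s) = Σⱼ cⱼ z^{2j-n-μ} s^{n-j}` is the
homogenisation of `dⁿ⁺ᵘ/dtⁿ⁺ᵘ (t² - 1)ⁿ`; moreover `R_n^{-μ} = (-1)^μ conj R_n^μ`. A continuous `R`
agreeing with this polynomial on a dense set is the polynomial.

Since `∂_η w = 0`, `∂_η s = 2w`, `∂_ξ w = 2`, `∂_ξ s = 2 w̄` and `w w̄ = s - z²`, the two identities
reduce to the recurrences `∂_s L_{N+1,μ} = -(N+1) L_{N,μ+1}` and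
`(M+1) L_{N+1,M+1} + (s - z²) ∂_s L_{N+1,M+1} = (N+1)(N+M+2)(N+M+1) L_{N,M}`, which are identities
between binomial coefficients and descending factorials. Negative orders follow by conjugation,
which exchanges `∂_η` and `∂_ξ`.
-/

open Finset

def legendreCoeff (n μ j : ℕ) : ℤ :=
  (-1) ^ (n + j) * n.choose j * (2 * j).descFactorial (n + μ)

lemma legendreCoeff_eq_zero_of_lt {n μ j : ℕ} (h : 2 * j < n + μ) : legendreCoeff n μ j = 0 := by
  simp [legendreCoeff, Nat.descFactorial_of_lt h]

lemma legendreCoeff_succ_mul (N μ j : ℕ) :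
    legendreCoeff (N + 1) μ j * (N + 1 - j : ℕ) = -(N + 1) * legendreCoeff N (μ + 1) j := by
  have h := congrArg (Nat.cast : ℕ → ℤ) (Nat.choose_mul_succ_eq N j)
  push_cast at h
  simp only [legendreCoeff, show N + 1 + μ = N + (μ + 1) by omega, show N + 1 + j = N + j + 1 by omega,
    pow_succ]
  linear_combination ((-1 : ℤ) ^ (N + j) * ((2 * j).descFactorial (N + (μ + 1)) : ℤ)) * h

lemma cast_descFactorial_add_two (a K : ℕ) :
    (a.descFactorial (K + 2) : ℤ) = (a - K) * (a - K - 1) * a.descFactorial K := by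
  rcases lt_or_ge a K with h | h
  · simp [Nat.descFactorial_of_lt h]
  · rw [Nat.descFactorial_succ, Nat.descFactorial_succ]
    rcases h.eq_or_lt with rfl | h'
    · simp
    · push_cast [Nat.sub_sub, Nat.cast_sub h', Nat.cast_sub h]
      ring

lemma cast_add_two_descFactorial_add_two (a K : ℕ) :
    ((a + 2).descFactorial (K + 2) : ℤ) = (a + 2) * (a + 1) * a.descFactorial K := by
  rw [Nat.succ_descFactorial_succ, Nat.succ_descFactorial_succ]
  push_cast
  ring

lemma legendreCoeff_succ_succ (N M j : ℕ) (hj : j ≤ N) :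
    legendreCoeff (N + 1) (M + 1) (j + 1) * (M + 1 + (N - j) : ℕ)
      - legendreCoeff (N + 1) (M + 1) j * (N + 1 - j : ℕ)
      = (N + 1) * (N + M + 2) * (N + M + 1) * legendreCoeff N M j := by
  have h₁ := congrArg (Nat.cast : ℕ → ℤ) (Nat.add_one_mul_choose_eq N j)
  have h₂ := congrArg (Nat.cast : ℕ → ℤ) (Nat.choose_mul_succ_eq N j)
  have hD₁ := cast_add_two_descFactorial_add_two (2 * j) (N + M)
  have hD₂ := cast_descFactorial_add_two (2 * j) (N + M)
  simp only [legendreCoeff, show N + 1 + (M + 1) = N + M + 2 by omega,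
    show 2 * (j + 1) = 2 * j + 2 by omega, show N + 1 + (j + 1) = N + j + 1 + 1 by omega,
    show N + 1 + j = N + j + 1 by omega, pow_succ]
  push_cast [hD₁, hD₂, hj, show j ≤ N + 1 by omega] at h₁ h₂ ⊢
  linear_combination (-(-1 : ℤ) ^ (N + j) * ((2 * j).descFactorial (N + M) : ℤ)) *
    (2 * (2 * j + 1) * (M + 1 + N - j) * h₁ + (2 * j - (N + M)) * (2 * j - (N + M) - 1) * h₂)

section legendreHom
variable {R : Type*} [CommRing R]

-- Terms with `2 * j < n + μ` have coefficient zero, so the truncated exponent of `z` is harmless.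
def legendreHom (n μ : ℕ) (z s : R) : R :=
  ∑ j ∈ range (n + 1), (legendreCoeff n μ j : R) * z ^ (2 * j - (n + μ)) * s ^ (n - j)

def legendreHomDeriv (n μ : ℕ) (z s : R) : R :=
  ∑ j ∈ range (n + 1), (legendreCoeff n μ j : R) * z ^ (2 * j - (n + μ)) * ((n - j : ℕ) * s ^ (n - j - 1))

lemma map_legendreHom {S : Type*} [CommRing S] (f : R →+* S) (n μ : ℕ) (z s : R) :
    f (legendreHom n μ z s) = legendreHom n μ (f z) (f s) := by
  simp [legendreHom, map_sum]

lemma pow_mul_legendreHom_mul (n μ : ℕ) (c z s : R) :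
    c ^ μ * legendreHom n μ (c * z) (c ^ 2 * s) = c ^ n * legendreHom n μ z s := by
  simp only [legendreHom, mul_sum]
  refine sum_congr rfl fun j hj => ?_
  rcases lt_or_ge (2 * j) (n + μ) with h | h
  · simp [legendreCoeff_eq_zero_of_lt h]
  · have hn : n = μ + (2 * j - (n + μ)) + 2 * (n - j) := by
      have := mem_range.mp hj; omega
    rw [show c ^ n = c ^ μ * c ^ (2 * j - (n + μ)) * (c ^ 2) ^ (n - j) by
      rw [← pow_mul, ← pow_add, ← pow_add, ← hn]]
    ring

lemma legendreHomDeriv_succ (N μ : ℕ) (z s : R) :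
    legendreHomDeriv (N + 1) μ z s = -(N + 1) * legendreHom N (μ + 1) z s := by
  rw [legendreHomDeriv, sum_range_succ, legendreHom, mul_sum]
  simp only [Nat.sub_self, Nat.cast_zero, zero_mul, mul_zero, add_zero]
  refine sum_congr rfl fun j _ => ?_
  have h := congrArg (Int.cast : ℤ → R) (legendreCoeff_succ_mul N μ j)
  push_cast at h
  rw [show 2 * j - (N + 1 + μ) = 2 * j - (N + (μ + 1)) by omega,
    show N + 1 - j - 1 = N - j by omega]
  linear_combination (z ^ (2 * j - (N + (μ + 1))) * s ^ (N - j)) * h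

lemma legendreHom_succ_succ (N M : ℕ) (z s : R) :
    (M + 1) * legendreHom (N + 1) (M + 1) z s + (s - z ^ 2) * legendreHomDeriv (N + 1) (M + 1) z s
      = (N + 1) * (N + M + 2) * (N + M + 1) * legendreHom N M z s := by
  have hfirst : (M + 1) * legendreHom (N + 1) (M + 1) z s + s * legendreHomDeriv (N + 1) (M + 1) z s
      = ∑ j ∈ range (N + 1), (legendreCoeff (N + 1) (M + 1) (j + 1) : R) * (M + 1 + (N - j) : ℕ)
          * z ^ (2 * j - (N + M)) * s ^ (N - j) := by
    rw [legendreHom, legendreHomDeriv, mul_sum, mul_sum, ← sum_add_distrib, sum_range_succ',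
      legendreCoeff_eq_zero_of_lt (n := N + 1) (μ := M + 1) (j := 0) (by omega)]
    simp only [Int.cast_zero, zero_mul, mul_zero, add_zero]
    refine sum_congr rfl fun j _ => ?_
    rw [show 2 * (j + 1) - (N + 1 + (M + 1)) = 2 * j - (N + M) by omega,
      show N + 1 - (j + 1) = N - j by omega]
    rcases N - j with _ | k
    · push_cast; ring
    · push_cast [Nat.add_sub_cancel]; ring
  have hsecond : z ^ 2 * legendreHomDeriv (N + 1) (M + 1) z s
      = ∑ j ∈ range (N + 1), (legendreCoeff (N + 1) (M + 1) j : R) * (N + 1 - j : ℕ)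
          * z ^ (2 * j - (N + M)) * s ^ (N - j) := by
    rw [legendreHomDeriv, sum_range_succ, mul_add, mul_sum]
    simp only [Nat.sub_self, Nat.cast_zero, zero_mul, mul_zero, add_zero]
    refine sum_congr rfl fun j _ => ?_
    rw [show N + 1 - j - 1 = N - j by omega]
    rcases lt_or_ge (2 * j) (N + 1 + (M + 1)) with h | h
    · simp [legendreCoeff_eq_zero_of_lt h]
    · rw [show 2 * j - (N + M) = 2 * j - (N + 1 + (M + 1)) + 2 by omega]; ring
  rw [sub_mul, ← add_sub_assoc, hfirst, hsecond, legendreHom, mul_sum, ← sum_sub_distrib]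
  refine sum_congr rfl fun j hj => ?_
  have h := congrArg (Int.cast : ℤ → R) (legendreCoeff_succ_succ N M j (by have := mem_range.mp hj; omega))
  push_cast at h ⊢
  linear_combination (z ^ (2 * j - (N + M)) * s ^ (N - j)) * h
end legendreHom

lemma iteratedDeriv_sq_sub_one_pow (n μ : ℕ) (t : ℝ) :
    iteratedDeriv (n + μ) (fun x : ℝ => (x ^ 2 - 1) ^ n) t = legendreHom n μ t 1 := by
  have hexp : (fun x : ℝ => (x ^ 2 - 1) ^ n)
      = fun x => ∑ j ∈ range (n + 1), ((-1) ^ (n + j) * n.choose j : ℝ) * x ^ (2 * j) := by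
    funext x
    rw [sub_pow]
    refine sum_congr rfl fun j _ => ?_
    rw [← pow_mul, one_pow, add_comm j]
    ring
  rw [hexp, iteratedDeriv_fun_sum (fun j _ => by fun_prop), legendreHom]
  refine sum_congr rfl fun j _ => ?_
  rw [iteratedDeriv_const_mul_field, iteratedDeriv_pow, legendreCoeff]
  push_cast
  ring

lemma pow_mul_legP_div (n μ : ℕ) {r ρ z : ℝ} (hr : 0 < r) (hρ : 0 ≤ ρ) (h : ρ ^ 2 + z ^ 2 = r ^ 2) :
    r ^ n * legP n μ (z / r) = (-1) ^ μ / (2 ^ n * n.factorial) * ρ ^ μ * legendreHom n μ z (r ^ 2) := by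
  have hsqrt : Real.sqrt (1 - (z / r) ^ 2) = ρ / r := by
    rw [show 1 - (z / r) ^ 2 = (ρ / r) ^ 2 by field_simp; linarith, Real.sqrt_sq (by positivity)]
  have hhom := pow_mul_legendreHom_mul n μ r (z / r) 1
  rw [mul_div_cancel₀ z hr.ne', mul_one] at hhom
  rw [legP, iteratedDeriv_sq_sub_one_pow, hsqrt, div_pow ρ]
  field_simp
  linear_combination (-ρ ^ μ) * hhom

open Complex ComplexConjugate

@[norm_cast]
lemma ofReal_legendreHom (n μ : ℕ) (z s : ℝ) :
    ((legendreHom n μ z s : ℝ) : ℂ) = legendreHom n μ (z : ℂ) (s : ℂ) :=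
  map_legendreHom ofRealHom n μ z s

noncomputable def xyComplex (p : ℝ × ℝ × ℝ) : ℂ := (p.1 : ℂ) + (p.2.1 : ℝ) * I

noncomputable def solidRCoeff (n μ : ℕ) : ℂ :=
  (-1) ^ n * (-I) ^ μ / ((n + μ).factorial * 2 ^ n * n.factorial)

noncomputable def solidRPoly (n μ : ℕ) (p : ℝ × ℝ × ℝ) : ℂ :=
  solidRCoeff n μ * xyComplex p ^ μ *
    legendreHom n μ (p.2.2 : ℂ) ((p.1 ^ 2 + p.2.1 ^ 2 + p.2.2 ^ 2 : ℝ) : ℂ)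

lemma norm_pow_mul_exp_mul_arg (w : ℂ) (μ : ℕ) : (‖w‖ : ℂ) ^ μ * exp (μ * I * arg w) = w ^ μ := by
  rw [show (μ : ℂ) * I * arg w = μ * (arg w * I) by ring, exp_nat_mul, ← mul_pow,
    norm_mul_exp_arg_mul_I]

lemma sphNorm_pos {p : ℝ × ℝ × ℝ} (hp : p ≠ 0) : 0 < sphNorm p := by
  refine Real.sqrt_pos.2 (lt_of_le_of_ne (by positivity) fun h => hp ?_)
  obtain ⟨x, y, z⟩ := p
  have hx : x = 0 := by nlinarith [sq_nonneg x, sq_nonneg y, sq_nonneg z]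
  have hy : y = 0 := by nlinarith [sq_nonneg x, sq_nonneg y, sq_nonneg z]
  have hz : z = 0 := by nlinarith [sq_nonneg x, sq_nonneg y, sq_nonneg z]
  simp [hx, hy, hz]

lemma solidR_natCast (n μ : ℕ) {p : ℝ × ℝ × ℝ} (hp : p ≠ 0) :
    solidR n μ p = solidRPoly n μ p := by
  have hsq : sphNorm p ^ 2 = p.1 ^ 2 + p.2.1 ^ 2 + p.2.2 ^ 2 := Real.sq_sqrt (by positivity)
  have hnorm : ‖xyComplex p‖ ^ 2 + p.2.2 ^ 2 = sphNorm p ^ 2 := by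
    rw [Complex.sq_norm, xyComplex, normSq_add_mul_I, hsq]
  have key := congrArg ((↑) : ℝ → ℂ) (pow_mul_legP_div n μ (sphNorm_pos hp) (norm_nonneg _) hnorm)
  rw [hsq] at key
  push_cast at key
  rw [solidR, solidRPoly, Int.natAbs_natCast, Int.cast_natCast, ← norm_pow_mul_exp_mul_arg (xyComplex p),
    solidRCoeff, neg_pow I, show (p.1 : ℂ) + (p.2.1 : ℝ) * I = xyComplex p from rfl]
  push_cast
  linear_combination (-1 : ℂ) ^ n * I ^ μ / ((n + μ).factorial : ℂ) * exp (μ * I * arg (xyComplex p)) * key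

lemma solidR_neg (n : ℕ) (m : ℤ) (p : ℝ × ℝ × ℝ) :
    solidR n (-m) p = (-1) ^ m.natAbs * conj (solidR n m p) := by
  have hI : (-1 : ℂ) ^ m.natAbs * (-I) ^ m.natAbs = I ^ m.natAbs := by
    rw [← mul_pow, neg_one_mul, neg_neg]
  simp only [solidR, Int.natAbs_neg, map_mul, map_div₀, map_pow, conj_I, conj_ofReal, map_neg,
    map_one, map_natCast, ← exp_conj, map_intCast, Int.cast_neg, neg_mul, mul_neg]
  rw [← hI]
  ring

lemma conj_solidRPoly_zero (n : ℕ) (p : ℝ × ℝ × ℝ) : conj (solidRPoly n 0 p) = solidRPoly n 0 p := by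
  simp only [solidRPoly, solidRCoeff, pow_zero, mul_one, add_zero, ← ofReal_legendreHom]
  simp [map_div₀, map_ofNat]

noncomputable def solidRExt (n : ℕ) (m : ℤ) : ℝ × ℝ × ℝ → ℂ :=
  if 0 ≤ m then solidRPoly n m.toNat else fun p => (-1) ^ m.natAbs * conj (solidRPoly n m.natAbs p)

lemma solidRExt_natCast (n μ : ℕ) : solidRExt n μ = solidRPoly n μ := by
  simp [solidRExt]

lemma solidRExt_neg_natCast (n μ : ℕ) :
    solidRExt n (-μ) = fun p => (-1) ^ μ * conj (solidRPoly n μ p) := by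
  rcases μ.eq_zero_or_pos with rfl | hμ
  · simp [solidRExt, conj_solidRPoly_zero]
  · simp [solidRExt, hμ.ne']

lemma solidR_eq_solidRExt (n : ℕ) (m : ℤ) {p : ℝ × ℝ × ℝ} (hp : p ≠ 0) :
    solidR n m p = solidRExt n m p := by
  obtain ⟨μ, rfl | rfl⟩ := m.eq_nat_or_neg
  · rw [solidR_natCast n μ hp, solidRExt_natCast]
  · rw [solidR_neg, Int.natAbs_natCast, solidR_natCast n μ hp, solidRExt_neg_natCast]

lemma differentiable_solidRPoly (n μ : ℕ) : Differentiable ℝ (solidRPoly n μ) := by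
  unfold solidRPoly xyComplex legendreHom
  fun_prop

lemma continuous_solidRExt (n : ℕ) (m : ℤ) : Continuous (solidRExt n m) := by
  unfold solidRExt
  split_ifs
  · exact (differentiable_solidRPoly n _).continuous
  · exact continuous_const.mul (continuous_conj.comp (differentiable_solidRPoly n _).continuous)

lemma dense_snd_fst_ne_zero : Dense {p : ℝ × ℝ × ℝ | p.2.1 ≠ 0} :=
  (dense_compl_singleton (0 : ℝ)).preimage (isOpenMap_fst.comp isOpenMap_snd)

lemma hasDerivAt_legendreHom {𝕜 : Type*} [NontriviallyNormedField 𝕜] (n μ : ℕ) (z s : 𝕜) :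
    HasDerivAt (legendreHom n μ z) (legendreHomDeriv n μ z s) s := by
  unfold legendreHom legendreHomDeriv
  exact HasDerivAt.fun_sum fun j _ => (hasDerivAt_pow (n - j) s).const_mul _

lemma hasDerivAt_pow_mul_legendreHom {𝕜 : Type*} [NontriviallyNormedField 𝕜] (n μ : ℕ)
    (w a z s b c : 𝕜) :
    HasDerivAt (fun τ => (w + a * τ) ^ μ * legendreHom n μ z (s + b * τ + c * τ ^ 2))
      (μ * w ^ (μ - 1) * a * legendreHom n μ z s + w ^ μ * (legendreHomDeriv n μ z s * b)) 0 := by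
  have hw : HasDerivAt (fun τ => (w + a * τ) ^ μ) (μ * w ^ (μ - 1) * a) 0 := by
    simpa using (((hasDerivAt_id (0 : 𝕜)).const_mul a).const_add w).fun_pow μ
  have hs : HasDerivAt (fun τ => s + b * τ + c * τ ^ 2) b 0 := by
    simpa using (((hasDerivAt_id (0 : 𝕜)).const_mul b).const_add s).fun_add
      ((hasDerivAt_pow 2 (0 : 𝕜)).const_mul c)
  have hL := (hasDerivAt_legendreHom n μ z s).comp_of_eq (0 : 𝕜) hs (by simp)
  simpa using hw.fun_mul hL

lemma hasLineDerivAt_solidRPoly (n μ : ℕ) (p : ℝ × ℝ × ℝ) (dx dy : ℝ) :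
    HasLineDerivAt ℝ (solidRPoly n μ)
      (solidRCoeff n μ * (μ * xyComplex p ^ (μ - 1) * (dx + dy * I) *
          legendreHom n μ (p.2.2 : ℂ) ((p.1 ^ 2 + p.2.1 ^ 2 + p.2.2 ^ 2 : ℝ) : ℂ)
        + xyComplex p ^ μ * (legendreHomDeriv n μ (p.2.2 : ℂ) ((p.1 ^ 2 + p.2.1 ^ 2 + p.2.2 ^ 2 : ℝ) : ℂ)
          * (2 * (p.1 * dx + p.2.1 * dy) : ℝ))))
      p (dx, dy, 0) := by
  have h := ((hasDerivAt_pow_mul_legendreHom n μ (xyComplex p) (dx + dy * I) (p.2.2 : ℂ)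
    ((p.1 ^ 2 + p.2.1 ^ 2 + p.2.2 ^ 2 : ℝ) : ℂ) ((2 * (p.1 * dx + p.2.1 * dy) : ℝ) : ℂ)
    ((dx ^ 2 + dy ^ 2 : ℝ) : ℂ)).const_mul (solidRCoeff n μ)).comp_ofReal (z := 0)
  refine h.congr_of_eventuallyEq (Filter.Eventually.of_forall fun t => ?_)
  simp only [solidRPoly, xyComplex, Prod.fst_add, Prod.snd_add, Prod.smul_mk, smul_eq_mul]
  push_cast
  ring_nf

lemma fderiv_solidRPoly_apply (n μ : ℕ) (p : ℝ × ℝ × ℝ) (dx dy : ℝ) :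
    fderiv ℝ (solidRPoly n μ) p (dx, dy, 0) =
      solidRCoeff n μ * (μ * xyComplex p ^ (μ - 1) * (dx + dy * I) *
          legendreHom n μ (p.2.2 : ℂ) ((p.1 ^ 2 + p.2.1 ^ 2 + p.2.2 ^ 2 : ℝ) : ℂ)
        + xyComplex p ^ μ * (legendreHomDeriv n μ (p.2.2 : ℂ) ((p.1 ^ 2 + p.2.1 ^ 2 + p.2.2 ^ 2 : ℝ) : ℂ)
          * (2 * (p.1 * dx + p.2.1 * dy) : ℝ))) :=
  (differentiable_solidRPoly n μ p).lineDeriv_eq_fderiv.symm.trans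
    (hasLineDerivAt_solidRPoly n μ p dx dy).lineDeriv

lemma I_mul_solidRCoeff_succ_right (N μ : ℕ) :
    I * solidRCoeff N (μ + 1) = -2 * (N + 1) * solidRCoeff (N + 1) μ := by
  simp only [solidRCoeff, show N + 1 + μ = N + (μ + 1) by omega, Nat.factorial_succ N, pow_succ]
  push_cast
  field_simp
  rw [I_sq]
  ring

lemma I_mul_solidRCoeff (N M : ℕ) :
    I * solidRCoeff N M = 2 * (N + 1) * (N + M + 2) * (N + M + 1) * solidRCoeff (N + 1) (M + 1) := by
  have h₁ : (N + M + 1 : ℂ) ≠ 0 := by norm_cast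
  have h₂ : (N + M + 1 + 1 : ℂ) ≠ 0 := by norm_cast
  simp only [solidRCoeff, show N + 1 + (M + 1) = N + M + 1 + 1 by omega, Nat.factorial_succ, pow_succ]
  push_cast
  field_simp
  ring

lemma solidRPoly_eta (N μ : ℕ) (p : ℝ × ℝ × ℝ) :
    fderiv ℝ (solidRPoly (N + 1) μ) p (1, 0, 0) + I * fderiv ℝ (solidRPoly (N + 1) μ) p (0, 1, 0)
      = I * solidRPoly N (μ + 1) p := by
  have hA := I_mul_solidRCoeff_succ_right N μ
  rw [fderiv_solidRPoly_apply, fderiv_solidRPoly_apply, legendreHomDeriv_succ, solidRPoly]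
  set L := legendreHom (N + 1) μ (p.2.2 : ℂ) ((p.1 ^ 2 + p.2.1 ^ 2 + p.2.2 ^ 2 : ℝ) : ℂ)
  set L' := legendreHom N (μ + 1) (p.2.2 : ℂ) ((p.1 ^ 2 + p.2.1 ^ 2 + p.2.2 ^ 2 : ℝ) : ℂ)
  simp only [xyComplex]
  push_cast
  linear_combination (solidRCoeff (N + 1) μ * μ * (p.1 + p.2.1 * I) ^ (μ - 1) * L) * I_mul_I
    - ((p.1 + p.2.1 * I) ^ (μ + 1) * L') * hA

lemma solidRPoly_xi (N M : ℕ) (p : ℝ × ℝ × ℝ) :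
    fderiv ℝ (solidRPoly (N + 1) (M + 1)) p (1, 0, 0) - I * fderiv ℝ (solidRPoly (N + 1) (M + 1)) p (0, 1, 0)
      = I * solidRPoly N M p := by
  have hA := I_mul_solidRCoeff N M
  have hL := legendreHom_succ_succ N M (p.2.2 : ℂ) ((p.1 ^ 2 + p.2.1 ^ 2 + p.2.2 ^ 2 : ℝ) : ℂ)
  rw [fderiv_solidRPoly_apply, fderiv_solidRPoly_apply, solidRPoly, Nat.add_sub_cancel]
  set L := legendreHom (N + 1) (M + 1) (p.2.2 : ℂ) ((p.1 ^ 2 + p.2.1 ^ 2 + p.2.2 ^ 2 : ℝ) : ℂ)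
  set D := legendreHomDeriv (N + 1) (M + 1) (p.2.2 : ℂ) ((p.1 ^ 2 + p.2.1 ^ 2 + p.2.2 ^ 2 : ℝ) : ℂ)
  set L' := legendreHom N M (p.2.2 : ℂ) ((p.1 ^ 2 + p.2.1 ^ 2 + p.2.2 ^ 2 : ℝ) : ℂ)
  set A := solidRCoeff (N + 1) (M + 1)
  simp only [xyComplex]
  push_cast at hL ⊢
  linear_combination (2 * A * (p.1 + p.2.1 * I) ^ M) * hL - ((p.1 + p.2.1 * I) ^ M * L') * hA
    - (A * (M + 1) * (p.1 + p.2.1 * I) ^ M * L + 2 * A * (p.1 + p.2.1 * I) ^ M * D * p.2.1 ^ 2) * I_mul_I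

lemma fderiv_const_mul_conj_apply {E : Type*} [NormedAddCommGroup E] [NormedSpace ℝ E] {f : E → ℂ}
    {p : E} (hf : DifferentiableAt ℝ f p) (c : ℂ) (v : E) :
    fderiv ℝ (fun q => c * conj (f q)) p v = c * conj (fderiv ℝ f p v) := by
  have h : HasFDerivAt (fun q => c * conj (f q)) (c • (conjCLE : ℂ →L[ℝ] ℂ).comp (fderiv ℝ f p)) p :=
    (conjCLE.hasFDerivAt.comp p hf.hasFDerivAt).const_mul c
  rw [h.fderiv]
  simp

lemma solidRExt_eta (N : ℕ) (m : ℤ) (p : ℝ × ℝ × ℝ) :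
    fderiv ℝ (solidRExt (N + 1) m) p (1, 0, 0) + I * fderiv ℝ (solidRExt (N + 1) m) p (0, 1, 0)
      = I * solidRExt N (m + 1) p := by
  obtain ⟨μ, rfl | rfl⟩ : ∃ μ : ℕ, m = μ ∨ m = -(μ + 1 : ℕ) := by
    rcases le_or_gt 0 m with h | h
    · exact ⟨m.toNat, Or.inl (by omega)⟩
    · exact ⟨(-m - 1).toNat, Or.inr (by omega)⟩
  · rw [solidRExt_natCast, ← Nat.cast_succ, solidRExt_natCast]
    exact solidRPoly_eta N μ p
  · have h := congrArg conj (solidRPoly_xi N μ p)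
    rw [show -((μ + 1 : ℕ) : ℤ) + 1 = -μ by push_cast; ring, solidRExt_neg_natCast,
      solidRExt_neg_natCast, fderiv_const_mul_conj_apply (differentiable_solidRPoly _ _ p),
      fderiv_const_mul_conj_apply (differentiable_solidRPoly _ _ p)]
    simp only [map_sub, map_mul, conj_I] at h
    linear_combination (-1 : ℂ) ^ (μ + 1) * h

lemma solidRExt_xi (N : ℕ) (m : ℤ) (p : ℝ × ℝ × ℝ) :
    fderiv ℝ (solidRExt (N + 1) m) p (1, 0, 0) - I * fderiv ℝ (solidRExt (N + 1) m) p (0, 1, 0)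
      = I * solidRExt N (m - 1) p := by
  obtain ⟨μ, rfl | rfl⟩ : ∃ μ : ℕ, m = (μ + 1 : ℕ) ∨ m = -μ := by
    rcases le_or_gt 1 m with h | h
    · exact ⟨(m - 1).toNat, Or.inl (by omega)⟩
    · exact ⟨(-m).toNat, Or.inr (by omega)⟩
  · rw [solidRExt_natCast, Nat.cast_succ, add_sub_cancel_right, solidRExt_natCast]
    exact solidRPoly_xi N μ p
  · have h := congrArg conj (solidRPoly_eta N μ p)
    rw [solidRExt_neg_natCast, show -(μ : ℤ) - 1 = -(μ + 1 : ℕ) by push_cast; ring,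
      solidRExt_neg_natCast, fderiv_const_mul_conj_apply (differentiable_solidRPoly _ _ p),
      fderiv_const_mul_conj_apply (differentiable_solidRPoly _ _ p)]
    simp only [map_add, map_mul, conj_I] at h
    linear_combination (-1 : ℂ) ^ μ * h

theorem solidR_deta_dxi_general (R : ℕ → ℤ → (ℝ × ℝ × ℝ) → ℂ)
    (hdiff : ∀ n m, Differentiable ℝ (R n m))
    (hagree : ∀ n m (p : ℝ × ℝ × ℝ), (p.2.1 ≠ 0 ∨ 0 < p.1) → R n m p = solidR n m p)
    (n : ℕ) (hn : 1 ≤ n) (m : ℤ) :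
    ∀ p : ℝ × ℝ × ℝ,
      (fderiv ℝ (R n m) p (1, 0, 0) + Complex.I * fderiv ℝ (R n m) p (0, 1, 0)
          = Complex.I * R (n - 1) (m + 1) p) ∧
      (fderiv ℝ (R n m) p (1, 0, 0) - Complex.I * fderiv ℝ (R n m) p (0, 1, 0)
          = Complex.I * R (n - 1) (m - 1) p) := by
  have hR : ∀ n m, R n m = solidRExt n m := fun n m =>
    (hdiff n m).continuous.ext_on dense_snd_fst_ne_zero (continuous_solidRExt n m) fun p hp =>
      (hagree n m p (Or.inl hp)).trans
        (solidR_eq_solidRExt n m fun h => hp (by simp [h]))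
  obtain ⟨N, rfl⟩ := Nat.exists_eq_add_of_le' hn
  intro p
  simp only [hR, Nat.add_sub_cancel]
  exact ⟨solidRExt_eta N m p, solidRExt_xi N m p⟩

/-- `∂_η R_n^m = i R_{n-1}^{m+1}` and `∂_ξ R_n^m = i R_{n-1}^{m-1}` with
`∂_η = ∂_x + i ∂_y`, `∂_ξ = ∂_x - i ∂_y`, for the (unique) differentiable extension of
the spherical-coordinate formula for the regular solid harmonic to all of ℝ³
(with the convention `R_k^m = 0` for `|m| > k`, which holds for `solidR`). -/
theorem solidR_deta_dxi (R : ℕ → ℤ → (ℝ × ℝ × ℝ) → ℂ)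
    (hdiff : ∀ n m, Differentiable ℝ (R n m))
    (hagree : ∀ n m (p : ℝ × ℝ × ℝ), (p.2.1 ≠ 0 ∨ 0 < p.1) → R n m p = solidR n m p)
    (n : ℕ) (hn : 1 ≤ n) (m : ℤ) (hm : m.natAbs ≤ n) :
    ∀ p : ℝ × ℝ × ℝ,
      (fderiv ℝ (R n m) p (1, 0, 0) + Complex.I * fderiv ℝ (R n m) p (0, 1, 0)
          = Complex.I * R (n - 1) (m + 1) p) ∧
      (fderiv ℝ (R n m) p (1, 0, 0) - Complex.I * fderiv ℝ (R n m) p (0, 1, 0)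
          = Complex.I * R (n - 1) (m - 1) p) :=
  solidR_deta_dxi_general R hdiff hagree n hn m
end

section
/- Let Q: ℝ² → ℂ be continuous on the triangle T = {(u,v): 0 ≤ u, 0 ≤ v, u+v ≤ 1} and continuously differentiable, and suppose u ∂Q/∂u + v ∂Q/∂v = λ Q + g on T for some constant λ ∈ ℂ and continuous g. Then (λ + 2) ∫∫_T Q dv du = ∫₀¹ Q(u, 1-u) du - ∫∫_T g dv du. -/
/-!
Since `u ∂ᵤQ + v ∂ᵥQ + 2Q = ∂ᵤ(uQ) + ∂ᵥ(vQ)`, integrating the Euler identity over `T` is the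
divergence theorem for the radial field `(u, v) Q`. On each vertical slice the fundamental
theorem of calculus turns `∫ ∂ᵥ(vQ) dv` into `(1 - u) Q(u, 1 - u)`, the term at `v = 0` vanishing;
the swap `(u, v) ↦ (v, u)` preserves `T` and gives `u Q(u, 1 - u)` for the other half. Only the
hypotenuse contributes, with total flux `∫₀¹ Q(u, 1 - u) du`.
-/

open MeasureTheory Set

def stdTriangle : Set (ℝ × ℝ) := {p | 0 ≤ p.1 ∧ 0 ≤ p.2 ∧ p.1 + p.2 ≤ 1}

theorem mk_mem_stdTriangle {u v : ℝ} :
    (u, v) ∈ stdTriangle ↔ u ∈ Icc 0 1 ∧ v ∈ Icc 0 (1 - u) := by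
  simp only [stdTriangle, mem_ofPred_eq, mem_Icc]
  constructor
  · rintro ⟨hu, hv, huv⟩
    exact ⟨⟨hu, by linarith⟩, hv, by linarith⟩
  · rintro ⟨⟨hu, -⟩, hv, huv⟩
    exact ⟨hu, hv, by linarith⟩

theorem isClosed_stdTriangle : IsClosed stdTriangle :=
  (isClosed_le continuous_const continuous_fst).inter
    ((isClosed_le continuous_const continuous_snd).inter
      (isClosed_le (continuous_fst.add continuous_snd) continuous_const))

theorem isCompact_stdTriangle : IsCompact stdTriangle :=
  (isCompact_Icc (a := ((0:ℝ), (0:ℝ))) (b := (1, 1))).of_isClosed_subset isClosed_stdTriangle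
    fun _ ⟨h₁, h₂, h₃⟩ => ⟨⟨h₁, h₂⟩, ⟨by linarith, by linarith⟩⟩

theorem preimage_swap_stdTriangle : Prod.swap ⁻¹' stdTriangle = stdTriangle := by
  ext ⟨u, v⟩
  simp only [stdTriangle, mem_preimage, Prod.swap_prod_mk, mem_ofPred_eq, add_comm u v]
  tauto

theorem Continuous.integrableOn_stdTriangle {E : Type*} [NormedAddCommGroup E] {f : ℝ × ℝ → E}
    (hf : Continuous f) : IntegrableOn f stdTriangle :=
  hf.continuousOn.integrableOn_compact isCompact_stdTriangle

section
variable {E : Type*} [NormedAddCommGroup E] [NormedSpace ℝ E]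

theorem setIntegral_stdTriangle_swap (f : ℝ × ℝ → E) :
    ∫ p in stdTriangle, f p.swap = ∫ p in stdTriangle, f p := by
  conv_lhs => rw [← preimage_swap_stdTriangle]
  exact Measure.measurePreserving_swap.setIntegral_preimage_emb
    MeasurableEquiv.prodComm.measurableEmbedding f stdTriangle

theorem setIntegral_stdTriangle_eq_intervalIntegral {f : ℝ × ℝ → E}
    (hf : IntegrableOn f stdTriangle) :
    ∫ p in stdTriangle, f p = ∫ u in (0:ℝ)..1, ∫ v in (0:ℝ)..(1 - u), f (u, v) := by
  rw [← integral_indicator isClosed_stdTriangle.measurableSet, Measure.volume_eq_prod,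
    integral_prod _ ((integrable_indicator_iff isClosed_stdTriangle.measurableSet).2 hf),
    intervalIntegral.integral_of_le zero_le_one, ← integral_Icc_eq_integral_Ioc,
    ← integral_indicator measurableSet_Icc]
  congr 1 with u
  classical
  by_cases hu : u ∈ Icc (0:ℝ) 1
  · rw [indicator_of_mem hu, intervalIntegral.integral_of_le (by linarith [hu.2]),
      ← integral_Icc_eq_integral_Ioc, ← integral_indicator measurableSet_Icc]
    congr 1 with v
    simp only [indicator_apply, mk_mem_stdTriangle, hu, true_and]
  · simp only [indicator_apply, mk_mem_stdTriangle, hu, false_and, if_false, integral_zero]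

end

section
variable {𝕜 E : Type*} [NontriviallyNormedField 𝕜] [NormedAddCommGroup E] [NormedSpace 𝕜 E]
  {f : 𝕜 × 𝕜 → E} {f' : 𝕜 × 𝕜 →L[𝕜] E} {x y : 𝕜}

theorem HasFDerivAt.hasDerivAt_mk_left (hf : HasFDerivAt f f' (x, y)) :
    HasDerivAt (fun t => f (t, y)) (f' (1, 0)) x :=
  hf.comp_hasDerivAt x ((hasDerivAt_id x).prodMk (hasDerivAt_const x y))

theorem HasFDerivAt.hasDerivAt_mk_right (hf : HasFDerivAt f f' (x, y)) :
    HasDerivAt (fun t => f (x, t)) (f' (0, 1)) y :=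
  hf.comp_hasDerivAt y ((hasDerivAt_const y x).prodMk (hasDerivAt_id y))

end

section
variable {E : Type*} [NormedAddCommGroup E] [NormedSpace ℝ E] [CompleteSpace E]
  {F D D₁ D₂ : ℝ × ℝ → E}

theorem setIntegral_stdTriangle_snd_smul_deriv_add (hF : Continuous F) (hD : Continuous D)
    (hderiv : ∀ u v, HasDerivAt (fun v => F (u, v)) (D (u, v)) v) :
    ∫ p in stdTriangle, (p.2 • D p + F p) = ∫ u in (0:ℝ)..1, (1 - u) • F (u, 1 - u) := by
  rw [setIntegral_stdTriangle_eq_intervalIntegral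
    (Continuous.integrableOn_stdTriangle (by fun_prop))]
  refine intervalIntegral.integral_congr fun u _ => ?_
  have hprod : ∀ v, HasDerivAt (fun v => v • F (u, v)) (v • D (u, v) + F (u, v)) v := fun v => by
    have h := (hasDerivAt_id' v).smul (hderiv u v)
    rw [one_smul] at h
    exact h
  rw [intervalIntegral.integral_eq_sub_of_hasDerivAt (fun v _ => hprod v)
    (Continuous.intervalIntegrable (by fun_prop) _ _), zero_smul, sub_zero]

theorem setIntegral_stdTriangle_fst_smul_deriv_add (hF : Continuous F) (hD : Continuous D)
    (hderiv : ∀ u v, HasDerivAt (fun u => F (u, v)) (D (u, v)) u) :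
    ∫ p in stdTriangle, (p.1 • D p + F p) = ∫ u in (0:ℝ)..1, u • F (u, 1 - u) := by
  rw [← setIntegral_stdTriangle_swap]
  have hswapped := setIntegral_stdTriangle_snd_smul_deriv_add (hF.comp continuous_swap)
    (hD.comp continuous_swap) fun u v => hderiv v u
  simp only [Function.comp_apply, Prod.swap_prod_mk] at hswapped
  simp only [Prod.fst_swap, hswapped]
  simpa using intervalIntegral.integral_comp_sub_left (a := 0) (b := 1)
    (fun u => u • F (u, 1 - u)) 1

theorem setIntegral_stdTriangle_euler (hF : Continuous F) (hD₁ : Continuous D₁)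
    (hD₂ : Continuous D₂) (h₁ : ∀ u v, HasDerivAt (fun u => F (u, v)) (D₁ (u, v)) u)
    (h₂ : ∀ u v, HasDerivAt (fun v => F (u, v)) (D₂ (u, v)) v) :
    ∫ p in stdTriangle, (p.1 • D₁ p + p.2 • D₂ p + (2:ℝ) • F p)
      = ∫ u in (0:ℝ)..1, F (u, 1 - u) :=
  calc ∫ p in stdTriangle, (p.1 • D₁ p + p.2 • D₂ p + (2:ℝ) • F p)
      = ∫ p in stdTriangle, ((p.1 • D₁ p + F p) + (p.2 • D₂ p + F p)) := by
        congr 1 with p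
        rw [two_smul]
        abel
    _ = (∫ u in (0:ℝ)..1, u • F (u, 1 - u)) + ∫ u in (0:ℝ)..1, (1 - u) • F (u, 1 - u) := by
        rw [integral_add (Continuous.integrableOn_stdTriangle (by fun_prop))
            (Continuous.integrableOn_stdTriangle (by fun_prop)),
          setIntegral_stdTriangle_fst_smul_deriv_add hF hD₁ h₁,
          setIntegral_stdTriangle_snd_smul_deriv_add hF hD₂ h₂]
    _ = ∫ u in (0:ℝ)..1, F (u, 1 - u) := by
        rw [← intervalIntegral.integral_add (Continuous.intervalIntegrable (by fun_prop) _ _)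
          (Continuous.intervalIntegrable (by fun_prop) _ _)]
        congr 1 with u
        rw [← add_smul, add_sub_cancel, one_smul]

end

/-- Euler identity combined with integration by parts over the standard triangle:
if `u ∂Q/∂u + v ∂Q/∂v = λ Q + g` on `T`, then
`(λ + 2) ∬_T Q = ∫₀¹ Q(u, 1-u) du - ∬_T g`. -/
theorem triangle_euler_recursion (Q g : ℝ × ℝ → ℂ) (hQ : ContDiff ℝ 1 Q)
    (hg : Continuous g) (lam : ℂ)
    (heuler : ∀ u v : ℝ, 0 ≤ u → 0 ≤ v → u + v ≤ 1 →
      (u : ℂ) * fderiv ℝ Q (u, v) (1, 0) + (v : ℂ) * fderiv ℝ Q (u, v) (0, 1)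
        = lam * Q (u, v) + g (u, v)) :
    (lam + 2) * (∫ u in (0:ℝ)..1, ∫ v in (0:ℝ)..(1 - u), Q (u, v))
      = (∫ u in (0:ℝ)..1, Q (u, 1 - u))
        - ∫ u in (0:ℝ)..1, ∫ v in (0:ℝ)..(1 - u), g (u, v) := by
  have hQ' : Continuous (fderiv ℝ Q) := hQ.continuous_fderiv one_ne_zero
  have hQd (p : ℝ × ℝ) : HasFDerivAt Q (fderiv ℝ Q p) p :=
    (hQ.differentiable one_ne_zero p).hasFDerivAt
  have hdiv := setIntegral_stdTriangle_euler hQ.continuous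
    (hQ'.clm_apply continuous_const) (hQ'.clm_apply continuous_const)
    (fun u v => (hQd (u, v)).hasDerivAt_mk_left) (fun u v => (hQd (u, v)).hasDerivAt_mk_right)
  rw [setIntegral_congr_fun isClosed_stdTriangle.measurableSet
      (g := fun p => (lam + 2) * Q p + g p) fun ⟨u, v⟩ ⟨hu, hv, huv⟩ => by
        simp only [Complex.real_smul]
        push_cast
        linear_combination heuler u v hu hv huv,
    integral_add ((hQ.continuous.const_mul _).integrableOn_stdTriangle)
      hg.integrableOn_stdTriangle,
    integral_const_mul,
    setIntegral_stdTriangle_eq_intervalIntegral hQ.continuous.integrableOn_stdTriangle,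
    setIntegral_stdTriangle_eq_intervalIntegral hg.integrableOn_stdTriangle] at hdiv
  linear_combination hdiv
end
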